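/- arXiv:1807.05690 — 2 statements merged into one kernel-verified Lean document; each statement's English description precedes it below -/
import Mathlib

section
/- Let U : ℝ → M₃(ℂ) be measurable with ∫_ℝ ‖U(y)‖ dy < ∞. For each λ ∈ ℂ with Im λ ≥ 0 there exists a unique bounded continuous n(·,λ) : ℝ → ℂ³ satisfying n(x,λ) = e₁ + ∫_{−∞}^x D_λ(x−y) (U(y) n(y,λ)) dy, where e₁ = (1,0,0)ᵀ and D_λ(t) = diag(1, e^{2iλt}, e^{2iλt}); it satisfies sup_x |n(x,λ)| ≤ exp(∫_ℝ ‖U(y)‖ dy). Moreover, for each fixed x ∈ ℝ, the map λ ↦ n(x,λ) is continuous on the closed upper half-plane {Im λ ≥ 0} and holomorphic on the open upper half-plane {Im λ > 0}. -/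
/-! For `Im λ ≥ 0` and `y ≤ x` the kernel `D_λ(x - y) U(y)` has norm at most `u(y) = ‖U(y)‖`.
With `F(x) = ∫_{-∞}^x u`, the absolutely continuous `F` satisfies
`∫_{-∞}^x u Fᵏ/k! = F(x)^{k+1}/(k+1)!`, so the `k`-th iterate of the Volterra operator applied to
`e₁` is bounded by `Fᵏ/k!`. The Neumann series therefore converges uniformly in `x` and `λ` to a
solution bounded by `exp (∫ u)`, and the same estimate kills the difference of two bounded
solutions. Each iterate is continuous in `λ` by dominated convergence and holomorphic for
`Im λ > 0` by differentiation under the integral sign, the derivative being dominated through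
Cauchy's estimate; both properties pass to the uniform limit. -/

noncomputable section
open MeasureTheory Complex Matrix Filter
open scoped Real Topology

abbrev Mat3 := Matrix (Fin 3) (Fin 3) ℂ

/-- Operator norm of a 3×3 complex matrix. -/
def opNorm (A : Mat3) : ℝ := ‖Matrix.toEuclideanCLM (𝕜 := ℂ) A‖

/-- Euclidean norm of a vector in ℂ³. -/
def vecNorm (w : Fin 3 → ℂ) : ℝ := Real.sqrt (∑ i, ‖w i‖ ^ 2)

/-- `e₁ = (1,0,0)ᵀ`. -/
def e1 : Fin 3 → ℂ := fun i => if i = 0 then 1 else 0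

/-- The diagonal factor `D_λ(t) = diag(1, e^{2iλt}, e^{2iλt})` acting on the `i`-th entry. -/
def dFac (lam : ℂ) (t : ℝ) (i : Fin 3) : ℂ :=
  if i = 0 then 1 else Complex.exp (2 * Complex.I * lam * t)

/-- `n` is a bounded continuous solution of
`n(x,λ) = e₁ + ∫_{-∞}^x D_λ(x-y) (U(y) n(y,λ)) dy`. -/
def IsJostCol (U : ℝ → Mat3) (lam : ℂ) (n : ℝ → Fin 3 → ℂ) : Prop :=
  (∀ i, Continuous fun x => n x i) ∧
  (∃ C : ℝ, ∀ x, vecNorm (n x) ≤ C) ∧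
  (∀ (x : ℝ) (i : Fin 3),
    n x i = e1 i + ∫ y in Set.Iic x, dFac lam (x - y) i * (U y).mulVec (n y) i)

open Set Metric

theorem Real.hasSum_pow_div_factorial (a : ℝ) :
    HasSum (fun n : ℕ => a ^ n / n.factorial) (Real.exp a) := by
  rw [Real.exp_eq_exp_ℝ]
  exact NormedSpace.expSeries_div_hasSum_exp a

theorem AbsolutelyContinuousOnInterval.fun_pow {f : ℝ → ℝ} {a b : ℝ}
    (hf : AbsolutelyContinuousOnInterval f a b) (n : ℕ) :
    AbsolutelyContinuousOnInterval (fun x => f x ^ n) a b := by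
  induction n with
  | zero => simpa using contDiffOn_const.absolutelyContinuousOnInterval
  | succ n ih => simpa only [pow_succ] using ih.fun_mul hf

section CumulIntegral

variable {u : ℝ → ℝ}

def cumulIntegral (u : ℝ → ℝ) (x : ℝ) : ℝ := ∫ y in Iic x, u y

theorem cumulIntegral_nonneg (hu0 : 0 ≤ u) (x : ℝ) : 0 ≤ cumulIntegral u x :=
  setIntegral_nonneg measurableSet_Iic fun y _ => hu0 y

theorem cumulIntegral_le_integral (hu : Integrable u) (hu0 : 0 ≤ u) (x : ℝ) :
    cumulIntegral u x ≤ ∫ y, u y :=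
  setIntegral_le_integral hu (Eventually.of_forall hu0)

theorem cumulIntegral_sub_cumulIntegral (hu : Integrable u) (a b : ℝ) :
    cumulIntegral u b - cumulIntegral u a = ∫ y in a..b, u y :=
  intervalIntegral.integral_Iic_sub_Iic hu.integrableOn hu.integrableOn

theorem cumulIntegral_eq_add (hu : Integrable u) (a : ℝ) :
    cumulIntegral u = fun x => cumulIntegral u a + ∫ y in a..x, u y := by
  ext x
  rw [← cumulIntegral_sub_cumulIntegral hu, add_sub_cancel]

theorem continuous_cumulIntegral (hu : Integrable u) : Continuous (cumulIntegral u) := by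
  rw [cumulIntegral_eq_add hu 0]
  exact continuous_const.add
    (intervalIntegral.continuous_primitive (fun _ _ => hu.intervalIntegrable) 0)

theorem tendsto_cumulIntegral_atBot (hu : Integrable u) :
    Tendsto (cumulIntegral u) atBot (𝓝 0) := by
  have h := (intervalIntegral_tendsto_integral_Iic 0 hu.integrableOn tendsto_id).const_sub
    (cumulIntegral u 0)
  rw [cumulIntegral, sub_self] at h
  refine h.congr fun a => ?_
  rw [← cumulIntegral_sub_cumulIntegral hu, cumulIntegral, id, sub_sub_cancel]

theorem ae_hasDerivAt_cumulIntegral (hu : Integrable u) :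
    ∀ᵐ x, HasDerivAt (cumulIntegral u) (u x) x := by
  filter_upwards [LocallyIntegrable.ae_hasDerivAt_integral hu.locallyIntegrable] with x hx
  rw [cumulIntegral_eq_add hu 0]
  exact (hx 0).const_add _

theorem absolutelyContinuousOnInterval_cumulIntegral (hu : Integrable u) (a b : ℝ) :
    AbsolutelyContinuousOnInterval (cumulIntegral u) a b := by
  rw [cumulIntegral_eq_add hu a]
  exact contDiffOn_const.absolutelyContinuousOnInterval.add
    (hu.intervalIntegrable.absolutelyContinuousOnInterval_intervalIntegral left_mem_uIcc)

theorem norm_cumulIntegral_le (hu : Integrable u) (x : ℝ) :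
    ‖cumulIntegral u x‖ ≤ ∫ y, ‖u y‖ :=
  (norm_integral_le_integral_norm _).trans
    (setIntegral_le_integral hu.norm (Eventually.of_forall fun _ => norm_nonneg _))

theorem integrable_mul_cumulIntegral_pow (hu : Integrable u) (k : ℕ) :
    Integrable (fun y => u y * cumulIntegral u y ^ k) :=
  hu.mul_bdd ((continuous_cumulIntegral hu).pow k).aestronglyMeasurable
    (Eventually.of_forall fun y => by
      rw [norm_pow]; exact pow_le_pow_left₀ (norm_nonneg _) (norm_cumulIntegral_le hu y) k)

theorem intervalIntegral_mul_cumulIntegral_pow (hu : Integrable u) (k : ℕ) (a b : ℝ) :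
    ∫ y in a..b, u y * cumulIntegral u y ^ k =
      (cumulIntegral u b ^ (k + 1) - cumulIntegral u a ^ (k + 1)) / (k + 1) := by
  have hderiv : ∀ᵐ y, y ∈ uIoc a b →
      deriv (fun y => cumulIntegral u y ^ (k + 1)) y = (k + 1) * (u y * cumulIntegral u y ^ k) := by
    filter_upwards [ae_hasDerivAt_cumulIntegral hu] with y hy _
    rw [(hy.fun_pow (k + 1)).deriv]
    push_cast
    ring
  rw [← ((absolutelyContinuousOnInterval_cumulIntegral hu a b).fun_pow
      (k + 1)).integral_deriv_eq_sub,
    intervalIntegral.integral_congr_ae hderiv, intervalIntegral.integral_const_mul]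
  field_simp

theorem integral_mul_cumulIntegral_pow (hu : Integrable u) (k : ℕ) (x : ℝ) :
    ∫ y in Iic x, u y * cumulIntegral u y ^ k = cumulIntegral u x ^ (k + 1) / (k + 1) := by
  refine tendsto_nhds_unique (intervalIntegral_tendsto_integral_Iic x
    (integrable_mul_cumulIntegral_pow hu k).integrableOn tendsto_id) ?_
  simp_rw [intervalIntegral_mul_cumulIntegral_pow hu]
  have h := (((tendsto_cumulIntegral_atBot hu).pow (k + 1)).const_sub
    (cumulIntegral u x ^ (k + 1))).div_const ((k : ℝ) + 1)
  simpa using h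

theorem integral_mul_cumulIntegral_pow_div_factorial (hu : Integrable u) (k : ℕ)
    (x : ℝ) : ∫ y in Iic x, u y * (cumulIntegral u y ^ k / k.factorial) =
      cumulIntegral u x ^ (k + 1) / (k + 1).factorial := by
  simp_rw [mul_div_assoc', integral_div, integral_mul_cumulIntegral_pow hu, Nat.factorial_succ]
  push_cast
  rw [div_div]

theorem pow_div_factorial_cumulIntegral_le (hu : Integrable u) (hu0 : 0 ≤ u)
    (k : ℕ) (x : ℝ) :
    cumulIntegral u x ^ k / k.factorial ≤ (∫ y, u y) ^ k / k.factorial := by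
  gcongr
  exacts [cumulIntegral_nonneg hu0 x, cumulIntegral_le_integral hu hu0 x]

end CumulIntegral

section HolomorphicIntegral

variable {α E : Type*} [MeasurableSpace α] {μ : Measure α}
  [NormedAddCommGroup E] [NormedSpace ℂ E]

theorem aestronglyMeasurable_deriv_of_eventually {F : ℂ → α → E} {z₀ : ℂ}
    (hF_meas : ∀ᶠ z in 𝓝 z₀, AEStronglyMeasurable (F z) μ)
    (h_diff : ∀ᵐ a ∂μ, DifferentiableAt ℂ (F · a) z₀) :
    AEStronglyMeasurable (fun a => deriv (F · a) z₀) μ := by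
  obtain ⟨ε, hε, hball⟩ := Metric.eventually_nhds_iff_ball.1 hF_meas
  set z : ℕ → ℂ := fun m => z₀ + ((ε / (m + 2) : ℝ) : ℂ)
  have hpos : ∀ m : ℕ, 0 < ε / (m + 2) := fun m => by positivity
  have hz_mem : ∀ m, z m ∈ ball z₀ ε := fun m => by
    rw [mem_ball, dist_self_add_left, norm_real, Real.norm_of_nonneg (hpos m).le]
    exact div_lt_self hε (by linarith [m.cast_nonneg (α := ℝ)])
  have hz_tendsto : Tendsto z atTop (𝓝[≠] z₀) := by
    refine tendsto_nhdsWithin_iff.2 ⟨?_, Eventually.of_forall fun m => ?_⟩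
    · have h : Tendsto (fun m : ℕ => ε / ((m : ℝ) + 2)) atTop (𝓝 0) :=
        tendsto_const_nhds.div_atTop (tendsto_atTop_add_const_right _ 2 tendsto_natCast_atTop_atTop)
      have h' := tendsto_const_nhds (x := z₀) |>.add ((continuous_ofReal.tendsto 0).comp h)
      rwa [ofReal_zero, add_zero] at h'
    · simp only [z, mem_compl_iff, mem_singleton_iff, add_eq_left, ofReal_eq_zero]
      exact (hpos m).ne'
  refine aestronglyMeasurable_of_tendsto_ae atTop
    (f := fun m a => slope (F · a) z₀ (z m)) (fun m => ?_) ?_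
  · simp only [slope_def_module]
    exact ((hball _ (hz_mem m)).sub (hball z₀ (mem_ball_self hε))).const_smul _
  · filter_upwards [h_diff] with a ha
    exact (hasDerivAt_iff_tendsto_slope.1 ha.hasDerivAt).comp hz_tendsto

theorem differentiableOn_integral_of_dominated [CompleteSpace E] {F : ℂ → α → E} {bound : α → ℝ}
    {T : Set ℂ} (hT : IsOpen T) (hF_meas : ∀ z ∈ T, AEStronglyMeasurable (F z) μ)
    (h_bound : ∀ᵐ a ∂μ, ∀ z ∈ T, ‖F z a‖ ≤ bound a) (bound_integrable : Integrable bound μ)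
    (h_diff : ∀ᵐ a ∂μ, DifferentiableOn ℂ (F · a) T) :
    DifferentiableOn ℂ (fun z => ∫ a, F z a ∂μ) T := by
  intro z₀ hz₀
  obtain ⟨ε, hε, hball⟩ := Metric.isOpen_iff.1 hT z₀ hz₀
  have hR : 0 < ε / 2 := half_pos hε
  have hclosed : ∀ z ∈ ball z₀ (ε / 2), closedBall z (ε / 2) ⊆ T := fun z hz w hw =>
    hball (by
      rw [mem_ball] at hz ⊢
      rw [mem_closedBall] at hw
      linarith [dist_triangle w z z₀])
  have hF_meas' : ∀ᶠ z in 𝓝 z₀, AEStronglyMeasurable (F z) μ :=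
    eventually_of_mem (hT.mem_nhds hz₀) hF_meas
  refine (hasDerivAt_integral_of_dominated_loc_of_deriv_le (ball_mem_nhds z₀ hR) hF_meas'
    (bound_integrable.mono' (hF_meas z₀ hz₀) (h_bound.mono fun a ha => ha z₀ hz₀))
    (aestronglyMeasurable_deriv_of_eventually hF_meas'
      (h_diff.mono fun a ha => ha.differentiableAt (hT.mem_nhds hz₀)))
    (F' := fun z a => deriv (F · a) z) (bound := fun a => bound a / (ε / 2)) ?_
    (bound_integrable.div_const _) ?_).2.differentiableAt.differentiableWithinAt
  · filter_upwards [h_bound, h_diff] with a hb hd z hz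
    exact norm_deriv_le_of_forall_mem_sphere_norm_le hR (hd.diffContOnCl_ball (hclosed z hz))
      fun w hw => hb w (hclosed z hz (sphere_subset_closedBall hw))
  · filter_upwards [h_diff] with a hd z hz
    exact (hd.differentiableAt (hT.mem_nhds (hclosed z hz (mem_closedBall_self hR.le)))).hasDerivAt

end HolomorphicIntegral

theorem tendsto_indicator_Iic_apply {E : Type*} [Zero E] [TopologicalSpace E]
    {g : ℝ → ℝ → E} {x₀ y : ℝ} (hy : y ≠ x₀) (hg : ContinuousAt (fun x => g x y) x₀) :
    Tendsto (fun x => (Iic x).indicator (g x) y) (𝓝 x₀) (𝓝 ((Iic x₀).indicator (g x₀) y)) := by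
  have hev : ∀ᶠ x in 𝓝 x₀, (y ≤ x ↔ y ≤ x₀) := by
    rcases hy.lt_or_gt with h | h
    · filter_upwards [lt_mem_nhds h] with x hx using iff_of_true hx.le h.le
    · filter_upwards [gt_mem_nhds h] with x hx using iff_of_false (not_le.2 hx) (not_le.2 h)
  simp only [indicator, mem_Iic]
  by_cases hyx : y ≤ x₀
  · rw [if_pos hyx]
    exact hg.congr' (hev.mono fun x hx => (if_pos (hx.2 hyx)).symm)
  · rw [if_neg hyx]
    exact tendsto_const_nhds.congr' (hev.mono fun x hx => (if_neg (mt hx.1 hyx)).symm)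

section Volterra

variable {E : Type*} [NormedAddCommGroup E] [NormedSpace ℂ E]

structure IsVolterraKernel (K : ℝ → ℝ → E →L[ℂ] E) (u : ℝ → ℝ) : Prop where
  aestronglyMeasurable : ∀ x, AEStronglyMeasurable (K x) (volume.restrict (Iic x))
  continuous : ∀ y, Continuous fun x => K x y
  norm_le : ∀ ⦃x y⦄, y ≤ x → ‖K x y‖ ≤ u y

def volterra (K : ℝ → ℝ → E →L[ℂ] E) (f : ℝ → E) (x : ℝ) : E := ∫ y in Iic x, K x y (f y)

def IsBoundedSolution (K : ℝ → ℝ → E →L[ℂ] E) (e : E) (n : ℝ → E) : Prop :=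
  Continuous n ∧ (∃ C, ∀ x, ‖n x‖ ≤ C) ∧ ∀ x, n x = e + volterra K n x

def neumannTerm (K : ℝ → ℝ → E →L[ℂ] E) (e : E) : ℕ → ℝ → E
  | 0 => fun _ => e
  | k + 1 => volterra K (neumannTerm K e k)

def neumannSeries (K : ℝ → ℝ → E →L[ℂ] E) (e : E) (x : ℝ) : E := ∑' k, neumannTerm K e k x

namespace IsVolterraKernel

variable {K : ℝ → ℝ → E →L[ℂ] E} {u : ℝ → ℝ} {f g : ℝ → E} {C : ℝ}

theorem nonneg (hK : IsVolterraKernel K u) : 0 ≤ u :=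
  fun y => (norm_nonneg (K y y)).trans (hK.norm_le le_rfl)

theorem norm_apply_le (hK : IsVolterraKernel K u) {x y : ℝ} (hy : y ≤ x) (v : E) :
    ‖K x y v‖ ≤ u y * ‖v‖ :=
  (K x y).le_opNorm v |>.trans (mul_le_mul_of_nonneg_right (hK.norm_le hy) (norm_nonneg _))

theorem aestronglyMeasurable_apply (hK : IsVolterraKernel K u) (hf : Continuous f) (x : ℝ) :
    AEStronglyMeasurable (fun y => K x y (f y)) (volume.restrict (Iic x)) :=
  isBoundedBilinearMap_apply.continuous.comp_aestronglyMeasurable₂ (hK.aestronglyMeasurable x)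
    hf.aestronglyMeasurable

theorem integrableOn_apply (hK : IsVolterraKernel K u) (hu : Integrable u) (hf : Continuous f)
    (hfC : ∀ y, ‖f y‖ ≤ C) (x : ℝ) : IntegrableOn (fun y => K x y (f y)) (Iic x) :=
  (hu.integrableOn.mul_const C).mono' (hK.aestronglyMeasurable_apply hf x)
    (ae_restrict_of_forall_mem measurableSet_Iic fun y hy =>
      (hK.norm_apply_le hy _).trans (mul_le_mul_of_nonneg_left (hfC y) (hK.nonneg y)))

theorem continuous_volterra (hK : IsVolterraKernel K u) (hu : Integrable u) (hf : Continuous f)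
    (hfC : ∀ y, ‖f y‖ ≤ C) : Continuous (volterra K f) := by
  have hC : 0 ≤ C := (norm_nonneg _).trans (hfC 0)
  rw [continuous_iff_continuousAt]
  intro x₀
  have hind : volterra K f = fun x => ∫ y, (Iic x).indicator (fun y => K x y (f y)) y := by
    ext x
    rw [volterra, integral_indicator measurableSet_Iic]
  rw [ContinuousAt, hind]
  refine tendsto_integral_filter_of_dominated_convergence (l := 𝓝 x₀) (fun y => u y * C)
    (Eventually.of_forall fun x => (aestronglyMeasurable_indicator_iff measurableSet_Iic).2
      (hK.aestronglyMeasurable_apply hf x))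
    (Eventually.of_forall fun x => Eventually.of_forall fun y => ?_) (hu.mul_const C) ?_
  · by_cases hy : y ∈ Iic x
    · rw [indicator_of_mem hy]
      exact (hK.norm_apply_le hy _).trans (mul_le_mul_of_nonneg_left (hfC y) (hK.nonneg y))
    · rw [indicator_of_notMem hy, norm_zero]
      exact mul_nonneg (hK.nonneg y) hC
  · filter_upwards [measure_eq_zero_iff_ae_notMem.1 (Real.volume_singleton (a := x₀))] with y hy
    exact tendsto_indicator_Iic_apply hy
      ((hK.continuous y).clm_apply continuous_const).continuousAt

theorem volterra_sub (hK : IsVolterraKernel K u) (hu : Integrable u) (hf : Continuous f)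
    (hfC : ∀ y, ‖f y‖ ≤ C) (hg : Continuous g) (hgC : ∀ y, ‖g y‖ ≤ C) (x : ℝ) :
    volterra K f x - volterra K g x = volterra K (f - g) x := by
  simp only [volterra, Pi.sub_apply, map_sub]
  exact (integral_sub (hK.integrableOn_apply hu hf hfC x) (hK.integrableOn_apply hu hg hgC x)).symm

theorem norm_volterra_le (hK : IsVolterraKernel K u) (hu : Integrable u) {k : ℕ}
    (hfk : ∀ y, ‖f y‖ ≤ C * (cumulIntegral u y ^ k / k.factorial)) (x : ℝ) :
    ‖volterra K f x‖ ≤ C * (cumulIntegral u x ^ (k + 1) / (k + 1).factorial) := by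
  have hint : Integrable (fun y => u y * (C * (cumulIntegral u y ^ k / k.factorial))) := by
    simpa only [mul_left_comm, mul_div_assoc'] using
      ((integrable_mul_cumulIntegral_pow hu k).const_mul C).div_const (k.factorial : ℝ)
  calc ‖volterra K f x‖
      ≤ ∫ y in Iic x, u y * (C * (cumulIntegral u y ^ k / k.factorial)) :=
        norm_integral_le_of_norm_le hint.integrableOn
          (ae_restrict_of_forall_mem measurableSet_Iic fun y hy =>
            (hK.norm_apply_le hy _).trans (mul_le_mul_of_nonneg_left (hfk y) (hK.nonneg y)))
    _ = C * (cumulIntegral u x ^ (k + 1) / (k + 1).factorial) := by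
        simp_rw [mul_left_comm (u _) C, integral_const_mul,
          integral_mul_cumulIntegral_pow_div_factorial hu]

theorem eq_zero_of_eq_volterra (hK : IsVolterraKernel K u) (hu : Integrable u) {d : ℝ → E}
    {C : ℝ} (hC : ∀ x, ‖d x‖ ≤ C) (hd : ∀ x, d x = volterra K d x) : d = 0 := by
  have hbound : ∀ k x, ‖d x‖ ≤ C * (cumulIntegral u x ^ k / k.factorial) := by
    intro k
    induction k with
    | zero => simpa using hC
    | succ k ih => exact fun x => (hd x).symm ▸ hK.norm_volterra_le hu ih x
  ext x
  have hlim := (FloorSemiring.tendsto_pow_div_factorial_atTop (cumulIntegral u x)).const_mul C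
  rw [mul_zero] at hlim
  exact norm_le_zero_iff.1 (ge_of_tendsto hlim (Eventually.of_forall fun k => hbound k x))

theorem continuous_neumannTerm_and_norm_le (hK : IsVolterraKernel K u) (hu : Integrable u)
    (e : E) (k : ℕ) : Continuous (neumannTerm K e k) ∧
      ∀ x, ‖neumannTerm K e k x‖ ≤ ‖e‖ * (cumulIntegral u x ^ k / k.factorial) := by
  induction k with
  | zero => exact ⟨continuous_const, fun x => by simp [neumannTerm]⟩
  | succ k ih =>
    have hbdd : ∀ y, ‖neumannTerm K e k y‖ ≤ ‖e‖ * ((∫ y, u y) ^ k / k.factorial) :=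
      fun y => (ih.2 y).trans (mul_le_mul_of_nonneg_left
        (pow_div_factorial_cumulIntegral_le hu hK.nonneg k y) (norm_nonneg e))
    exact ⟨hK.continuous_volterra hu ih.1 hbdd, hK.norm_volterra_le hu ih.2⟩

theorem continuous_neumannTerm (hK : IsVolterraKernel K u) (hu : Integrable u) (e : E) (k : ℕ) :
    Continuous (neumannTerm K e k) :=
  (hK.continuous_neumannTerm_and_norm_le hu e k).1

theorem norm_neumannTerm_le (hK : IsVolterraKernel K u) (hu : Integrable u) (e : E) (k : ℕ)
    (x : ℝ) : ‖neumannTerm K e k x‖ ≤ ‖e‖ * ((∫ y, u y) ^ k / k.factorial) :=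
  ((hK.continuous_neumannTerm_and_norm_le hu e k).2 x).trans
    (mul_le_mul_of_nonneg_left (pow_div_factorial_cumulIntegral_le hu hK.nonneg k x)
      (norm_nonneg e))

theorem norm_apply_neumannTerm_le (hK : IsVolterraKernel K u) (hu : Integrable u) (e : E)
    (k : ℕ) {x y : ℝ} (hy : y ≤ x) :
    ‖K x y (neumannTerm K e k y)‖ ≤ u y * (‖e‖ * ((∫ y, u y) ^ k / k.factorial)) :=
  (hK.norm_apply_le hy _).trans
    (mul_le_mul_of_nonneg_left (hK.norm_neumannTerm_le hu e k y) (hK.nonneg y))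

variable [CompleteSpace E]

theorem hasSum_neumannTerm (hK : IsVolterraKernel K u) (hu : Integrable u) (e : E) (x : ℝ) :
    HasSum (fun k => neumannTerm K e k x) (neumannSeries K e x) :=
  (((Real.summable_pow_div_factorial _).mul_left ‖e‖).of_norm_bounded
    fun k => hK.norm_neumannTerm_le hu e k x).hasSum

theorem norm_neumannSeries_le (hK : IsVolterraKernel K u) (hu : Integrable u) (e : E) (x : ℝ) :
    ‖neumannSeries K e x‖ ≤ ‖e‖ * Real.exp (∫ y, u y) :=
  (hK.hasSum_neumannTerm hu e x).norm_le_of_bounded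
    ((Real.hasSum_pow_div_factorial _).mul_left ‖e‖) fun k => hK.norm_neumannTerm_le hu e k x

theorem continuous_neumannSeries (hK : IsVolterraKernel K u) (hu : Integrable u) (e : E) :
    Continuous (neumannSeries K e) :=
  continuous_tsum (hK.continuous_neumannTerm hu e)
    ((Real.summable_pow_div_factorial _).mul_left ‖e‖) (hK.norm_neumannTerm_le hu e)

theorem neumannSeries_eq (hK : IsVolterraKernel K u) (hu : Integrable u) (e : E) (x : ℝ) :
    neumannSeries K e x = e + volterra K (neumannSeries K e) x := by
  have hvolterra :
      HasSum (fun k => neumannTerm K e (k + 1) x) (volterra K (neumannSeries K e) x) := by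
    refine hasSum_integral_of_dominated_convergence
      (fun k y => u y * (‖e‖ * ((∫ y, u y) ^ k / k.factorial)))
      (fun k => hK.aestronglyMeasurable_apply (hK.continuous_neumannTerm hu e k) x)
      (fun k => ae_restrict_of_forall_mem measurableSet_Iic fun y hy =>
        hK.norm_apply_neumannTerm_le hu e k hy)
      (Eventually.of_forall fun y => ((Real.summable_pow_div_factorial _).mul_left _).mul_left _)
      ?_ (Eventually.of_forall fun y => (hK.hasSum_neumannTerm hu e y).mapL (K x y))
    simp_rw [tsum_mul_left, (Real.hasSum_pow_div_factorial _).tsum_eq]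
    exact (hu.mul_const _).integrableOn
  rw [neumannSeries, (hK.hasSum_neumannTerm hu e x).summable.tsum_eq_zero_add, hvolterra.tsum_eq]
  rfl

theorem isBoundedSolution_neumannSeries (hK : IsVolterraKernel K u) (hu : Integrable u) (e : E) :
    IsBoundedSolution K e (neumannSeries K e) :=
  ⟨hK.continuous_neumannSeries hu e, ⟨_, hK.norm_neumannSeries_le hu e⟩, hK.neumannSeries_eq hu e⟩

theorem eq_neumannSeries (hK : IsVolterraKernel K u) (hu : Integrable u)
    {e : E} {n : ℝ → E} (hn : IsBoundedSolution K e n) : n = neumannSeries K e := by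
  obtain ⟨hcont, ⟨C, hC⟩, hn⟩ := hn
  set C' := max C (‖e‖ * Real.exp (∫ y, u y))
  have hnC : ∀ x, ‖n x‖ ≤ C' := fun x => (hC x).trans (le_max_left _ _)
  have hNC : ∀ x, ‖neumannSeries K e x‖ ≤ C' :=
    fun x => (hK.norm_neumannSeries_le hu e x).trans (le_max_right _ _)
  refine sub_eq_zero.1 (hK.eq_zero_of_eq_volterra hu (C := C' + C')
    (fun x => (norm_sub_le _ _).trans (add_le_add (hnC x) (hNC x))) fun x => ?_)
  rw [Pi.sub_apply, hn x, hK.neumannSeries_eq hu e x, add_sub_add_left_eq_sub,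
    hK.volterra_sub hu hcont hnC (hK.continuous_neumannSeries hu e) hNC]

end IsVolterraKernel

section Parametric

variable {K : ℂ → ℝ → ℝ → E →L[ℂ] E} {u : ℝ → ℝ} {S : Set ℂ}

theorem continuousOn_neumannTerm (hK : ∀ z ∈ S, IsVolterraKernel (K z) u) (hu : Integrable u)
    (hKS : ∀ x y, y ≤ x → ContinuousOn (fun z => K z x y) S) (e : E) (k : ℕ) (x : ℝ) :
    ContinuousOn (fun z => neumannTerm (K z) e k x) S := by
  induction k generalizing x with
  | zero => exact continuousOn_const
  | succ k ih =>
    exact continuousOn_of_dominated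
      (bound := fun y => u y * (‖e‖ * ((∫ y, u y) ^ k / k.factorial)))
      (fun z hz => (hK z hz).aestronglyMeasurable_apply ((hK z hz).continuous_neumannTerm hu e k) x)
      (fun z hz => ae_restrict_of_forall_mem measurableSet_Iic fun y hy =>
        (hK z hz).norm_apply_neumannTerm_le hu e k hy)
      (hu.mul_const _).integrableOn
      (ae_restrict_of_forall_mem measurableSet_Iic fun y hy => (hKS x y hy).clm_apply (ih y))

variable [CompleteSpace E]

theorem differentiableOn_neumannTerm (hS : IsOpen S)
    (hK : ∀ z ∈ S, IsVolterraKernel (K z) u) (hu : Integrable u)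
    (hKS : ∀ x y, y ≤ x → DifferentiableOn ℂ (fun z => K z x y) S) (e : E) (k : ℕ) (x : ℝ) :
    DifferentiableOn ℂ (fun z => neumannTerm (K z) e k x) S := by
  induction k generalizing x with
  | zero => exact differentiableOn_const _
  | succ k ih =>
    exact differentiableOn_integral_of_dominated hS
      (bound := fun y => u y * (‖e‖ * ((∫ y, u y) ^ k / k.factorial)))
      (fun z hz => (hK z hz).aestronglyMeasurable_apply ((hK z hz).continuous_neumannTerm hu e k) x)
      (ae_restrict_of_forall_mem measurableSet_Iic fun y hy z hz =>
        (hK z hz).norm_apply_neumannTerm_le hu e k hy)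
      (hu.mul_const _).integrableOn
      (ae_restrict_of_forall_mem measurableSet_Iic fun y hy => (hKS x y hy).clm_apply (ih y))

theorem continuousOn_neumannSeries (hK : ∀ z ∈ S, IsVolterraKernel (K z) u) (hu : Integrable u)
    (hKS : ∀ x y, y ≤ x → ContinuousOn (fun z => K z x y) S) (e : E) (x : ℝ) :
    ContinuousOn (fun z => neumannSeries (K z) e x) S :=
  continuousOn_tsum (fun k => continuousOn_neumannTerm hK hu hKS e k x)
    ((Real.summable_pow_div_factorial _).mul_left ‖e‖)
    fun k z hz => (hK z hz).norm_neumannTerm_le hu e k x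

theorem differentiableOn_neumannSeries (hS : IsOpen S) (hK : ∀ z ∈ S, IsVolterraKernel (K z) u)
    (hu : Integrable u) (hKS : ∀ x y, y ≤ x → DifferentiableOn ℂ (fun z => K z x y) S) (e : E)
    (x : ℝ) : DifferentiableOn ℂ (fun z => neumannSeries (K z) e x) S :=
  differentiableOn_tsum_of_summable_norm ((Real.summable_pow_div_factorial _).mul_left ‖e‖)
    (fun k => differentiableOn_neumannTerm hS hK hu hKS e k x) hS
    fun k z hz => (hK z hz).norm_neumannTerm_le hu e k x

end Parametric

end Volterra

section EuclideanDiagonal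

variable {𝕜 ι : Type*} [RCLike 𝕜] [Fintype ι] [DecidableEq ι]

def euclideanDiagonal : (ι → 𝕜) →L[𝕜] (EuclideanSpace 𝕜 ι →L[𝕜] EuclideanSpace 𝕜 ι) :=
  LinearMap.toContinuousLinearMap
    (toEuclideanCLM.toAlgEquiv.toLinearMap ∘ₗ diagonalLinearMap ι 𝕜 𝕜)

theorem euclideanDiagonal_apply (d : ι → 𝕜) (v : EuclideanSpace 𝕜 ι) (i : ι) :
    euclideanDiagonal d v i = d i * v i := by
  simp [euclideanDiagonal, mulVec_diagonal]

open scoped Matrix.Norms.L2Operator in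
theorem norm_euclideanDiagonal (d : ι → 𝕜) : ‖euclideanDiagonal d‖ = ‖d‖ :=
  l2_opNorm_diagonal d

theorem continuous_toEuclideanCLM : Continuous (toEuclideanCLM (𝕜 := 𝕜) (n := ι)) := by
  exact LinearMap.continuous_of_finiteDimensional
    (toEuclideanCLM (𝕜 := 𝕜) (n := ι)).toAlgEquiv.toLinearMap

end EuclideanDiagonal

local notation "ℂ³" => EuclideanSpace ℂ (Fin 3)

theorem norm_dFac_le {lam : ℂ} (hlam : 0 ≤ lam.im) {t : ℝ} (ht : 0 ≤ t) : ‖dFac lam t‖ ≤ 1 := by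
  refine (pi_norm_le_iff_of_nonneg zero_le_one).2 fun i => ?_
  unfold dFac
  split_ifs
  · simp
  · rw [Complex.norm_exp, Real.exp_le_one_iff]
    simp only [mul_re, mul_im, re_ofNat, im_ofNat, I_re, I_im, ofReal_re, ofReal_im]
    nlinarith

theorem continuous_dFac (lam : ℂ) : Continuous (dFac lam) :=
  continuous_pi fun i => by unfold dFac; split_ifs <;> fun_prop

theorem differentiable_dFac (t : ℝ) : Differentiable ℂ fun lam => dFac lam t :=
  differentiable_pi.2 fun i => by unfold dFac; split_ifs <;> fun_prop

def jostKernel (U : ℝ → Mat3) (lam : ℂ) (x y : ℝ) : ℂ³ →L[ℂ] ℂ³ :=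
  euclideanDiagonal (dFac lam (x - y)) ∘L toEuclideanCLM (𝕜 := ℂ) (U y)

theorem jostKernel_apply (U : ℝ → Mat3) (lam : ℂ) (x y : ℝ) (v : ℂ³) (i : Fin 3) :
    jostKernel U lam x y v i = dFac lam (x - y) i * (U y).mulVec v.ofLp i := by
  simp [jostKernel, euclideanDiagonal_apply]

theorem differentiable_jostKernel (U : ℝ → Mat3) (x y : ℝ) :
    Differentiable ℂ fun lam => jostKernel U lam x y :=
  (euclideanDiagonal.differentiable.comp (differentiable_dFac (x - y))).clm_comp
    (differentiable_const _)

theorem isVolterraKernel_jostKernel {U : ℝ → Mat3} (hU : ∀ i j, Measurable fun y => U y i j)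
    {lam : ℂ} (hlam : 0 ≤ lam.im) :
    IsVolterraKernel (jostKernel U lam) fun y => opNorm (U y) where
  aestronglyMeasurable x := by
    have hUm : @Measurable ℝ (Fin 3 → Fin 3 → ℂ) _ _ U :=
      measurable_pi_lambda _ fun i => measurable_pi_lambda _ fun j => hU i j
    exact isBoundedBilinearMap_comp.continuous.comp_aestronglyMeasurable₂
      (g := fun (A B : ℂ³ →L[ℂ] ℂ³) => A ∘L B)
      (euclideanDiagonal.continuous.comp
        ((continuous_dFac lam).comp (continuous_sub_left x))).aestronglyMeasurable
      (continuous_toEuclideanCLM.comp_aestronglyMeasurable hUm.aestronglyMeasurable)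
  continuous y := (euclideanDiagonal.continuous.comp
    ((continuous_dFac lam).comp (continuous_sub_right y))).clm_comp continuous_const
  norm_le x y hy := by
    refine (ContinuousLinearMap.opNorm_comp_le _ _).trans ?_
    rw [norm_euclideanDiagonal, opNorm]
    exact mul_le_of_le_one_left (norm_nonneg _) (norm_dFac_le hlam (sub_nonneg.2 hy))

theorem vecNorm_eq_norm (w : Fin 3 → ℂ) : vecNorm w = ‖(WithLp.toLp 2 w : ℂ³)‖ := by
  rw [vecNorm, EuclideanSpace.norm_eq]

theorem norm_toLp_e1 : ‖(WithLp.toLp 2 e1 : ℂ³)‖ = 1 := by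
  have h : (WithLp.toLp 2 e1 : ℂ³) = PiLp.single 2 0 1 := by
    ext i
    simp [e1]
  rw [h, PiLp.norm_single, norm_one]

theorem volterra_jostKernel_apply {U : ℝ → Mat3} (hU : ∀ i j, Measurable fun y => U y i j)
    (hUint : Integrable fun y => opNorm (U y)) {lam : ℂ} (hlam : 0 ≤ lam.im) {v : ℝ → ℂ³}
    (hv : Continuous v) {C : ℝ} (hvC : ∀ y, ‖v y‖ ≤ C) (x : ℝ) (i : Fin 3) :
    volterra (jostKernel U lam) v x i =
      ∫ y in Iic x, dFac lam (x - y) i * (U y).mulVec (v y).ofLp i := by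
  have h := (EuclideanSpace.proj (𝕜 := ℂ) i).integral_comp_comm
    ((isVolterraKernel_jostKernel hU hlam).integrableOn_apply hUint hv hvC x)
  simp only [PiLp.proj_apply, jostKernel_apply] at h
  rw [volterra, ← h]

theorem isJostCol_iff {U : ℝ → Mat3} (hU : ∀ i j, Measurable fun y => U y i j)
    (hUint : Integrable fun y => opNorm (U y)) {lam : ℂ} (hlam : 0 ≤ lam.im)
    (n : ℝ → Fin 3 → ℂ) :
    IsJostCol U lam n ↔
      IsBoundedSolution (jostKernel U lam) (WithLp.toLp 2 e1) fun x => WithLp.toLp 2 (n x) := by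
  have hcont : (∀ i, Continuous fun x => n x i) ↔ Continuous fun x => (WithLp.toLp 2 (n x) : ℂ³) :=
    continuous_pi_iff.symm.trans (EuclideanSpace.equiv (Fin 3) ℂ).symm.comp_continuous_iff.symm
  simp only [IsJostCol, IsBoundedSolution, hcont, vecNorm_eq_norm]
  refine and_congr_right fun hc => and_congr_right fun ⟨C, hC⟩ => forall_congr' fun x => ?_
  rw [PiLp.ext_iff]
  refine forall_congr' fun i => ?_
  rw [PiLp.add_apply, volterra_jostKernel_apply hU hUint hlam hc hC]

/-- For a measurable potential `U` with `∫ ‖U‖ < ∞` and each `λ` with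
`Im λ ≥ 0` there is a unique bounded continuous solution `n(·,λ)` of
`n(x,λ) = e₁ + ∫_{-∞}^x D_λ(x-y)(U(y)n(y,λ))dy`; it satisfies
`sup_x |n(x,λ)| ≤ exp(∫‖U‖)`, and for fixed `x` the map `λ ↦ n(x,λ)` is continuous on the
closed upper half-plane and holomorphic on the open upper half-plane. -/
theorem jost_column_upper_half_plane
    (U : ℝ → Mat3) (hUmeas : ∀ i j, Measurable fun y => U y i j)
    (hUint : Integrable (fun y => opNorm (U y)) volume) :
    ∃ n : ℝ → ℂ → Fin 3 → ℂ,
      (∀ lam : ℂ, 0 ≤ lam.im →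
        IsJostCol U lam (fun x => n x lam) ∧
        (∀ n' : ℝ → Fin 3 → ℂ, IsJostCol U lam n' → n' = fun x => n x lam) ∧
        ∀ x : ℝ, vecNorm (n x lam) ≤ Real.exp (∫ y : ℝ, opNorm (U y))) ∧
      (∀ x : ℝ,
        ContinuousOn (fun lam => n x lam) {lam : ℂ | 0 ≤ lam.im} ∧
        DifferentiableOn ℂ (fun lam => n x lam) {lam : ℂ | 0 < lam.im}) := by
  set e : ℂ³ := WithLp.toLp 2 e1
  have hK : ∀ lam ∈ {lam : ℂ | 0 ≤ lam.im},
      IsVolterraKernel (jostKernel U lam) fun y => opNorm (U y) :=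
    fun lam hlam => isVolterraKernel_jostKernel hUmeas hlam
  refine ⟨fun x lam => (neumannSeries (jostKernel U lam) e x).ofLp,
    fun lam hlam => ⟨?_, fun n' hn' => ?_, fun x => ?_⟩, fun x => ⟨?_, ?_⟩⟩
  · exact (isJostCol_iff hUmeas hUint hlam _).2
      ((hK lam hlam).isBoundedSolution_neumannSeries hUint e)
  · have h := (hK lam hlam).eq_neumannSeries hUint ((isJostCol_iff hUmeas hUint hlam n').1 hn')
    exact funext fun x => congrArg (fun f => (f x).ofLp) h
  · simpa [vecNorm_eq_norm, e, norm_toLp_e1] using (hK lam hlam).norm_neumannSeries_le hUint e x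
  · exact (PiLp.continuous_ofLp 2 _).comp_continuousOn (continuousOn_neumannSeries hK hUint
      (fun x y _ => (differentiable_jostKernel U x y).continuous.continuousOn) e x)
  · exact (EuclideanSpace.equiv (Fin 3) ℂ).differentiable.comp_differentiableOn
      (differentiableOn_neumannSeries (isOpen_lt continuous_const continuous_im)
        (fun lam (hlam : 0 < lam.im) => hK lam hlam.le) hUint
        (fun x y _ => (differentiable_jostKernel U x y).differentiableOn) e x)
end
end

section
/- Let ε ∈ {1,−1}, λ ∈ ℝ, and let u, v : ℝ → ℂ be continuous, with U the associated potential matrix. Let ψ : ℝ → M₃(ℂ) be differentiable with ψ(x) invertible for every x and ψ'(x) = (iλσ + U(x))ψ(x). Then the function φ(x) := J_ε (ψ(x)†)⁻¹ J_ε, where † denotes conjugate transpose and J_ε = diag(1, ε, ε), also satisfies φ'(x) = (iλσ + U(x))φ(x). -/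
noncomputable section
open MeasureTheory Complex Matrix Filter
open scoped Real Topology

/-- `σ = diag(-1,1,1)`. -/
def sigma3 : Mat3 := Matrix.diagonal ![-1, 1, 1]

/-- The potential matrix `U(x)` built from `u`, `v` and `ε`. -/
def potential (ε : ℂ) (u v : ℝ → ℂ) (x : ℝ) : Mat3 :=
  !![0, u x, v x;
     -ε * (starRingEnd ℂ) (u x), 0, 0;
     -ε * (starRingEnd ℂ) (v x), 0, 0]

/-- `J_ε = diag(1, ε, ε)`. -/
def Jmat (ε : ℂ) : Mat3 := Matrix.diagonal ![1, ε, ε]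

/-!
Differentiating `ψᴴ⁻¹` shows that it solves the adjoint equation `χ' = -Aᴴ χ`, where
`A = iλσ + U`. Since `J_ε² = 1` and `J_ε Aᴴ J_ε = -A`, conjugating by `J_ε` turns the adjoint
equation back into `φ' = A φ`.
-/

section MatrixCalculus

variable {𝕜 : Type*} [RCLike 𝕜] {m n : Type*} [Fintype n]

theorem Matrix.hasDerivAt_iff_apply {f : ℝ → Matrix m n 𝕜} {f' : Matrix m n 𝕜} {x : ℝ} :
    HasDerivAt f f' x ↔ ∀ i j, HasDerivAt (fun t => f t i j) (f' i j) x :=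
  hasDerivAt_pi.trans (forall_congr' fun _ => hasDerivAt_pi)

theorem HasDerivAt.matrix_conjTranspose [Fintype m] {f : ℝ → Matrix m n 𝕜}
    {f' : Matrix m n 𝕜} {x : ℝ} (hf : HasDerivAt f f' x) :
    HasDerivAt (fun t => (f t)ᴴ) f'ᴴ x :=
  hasDerivAt_iff_apply.2 fun i j => (hasDerivAt_iff_apply.1 hf j i).star

-- `HasDerivAt` on matrices only sees the product topology; a normed-ring structure is needed
-- just to access `hasFDerivAt_ringInverse` and the product rule.
attribute [local instance] Matrix.linftyOpNormedAddCommGroup Matrix.linftyOpNormedRing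
  Matrix.linftyOpNormedAlgebra

variable [DecidableEq n]

theorem HasDerivAt.matrix_inv {f : ℝ → Matrix n n 𝕜} {f' : Matrix n n 𝕜} {x : ℝ}
    (hf : HasDerivAt f f' x) (hx : IsUnit (f x)) :
    HasDerivAt (fun t => (f t)⁻¹) (-((f x)⁻¹ * f' * (f x)⁻¹)) x := by
  have : CompleteSpace (Matrix n n 𝕜) := FiniteDimensional.complete 𝕜 _
  obtain ⟨w, hw⟩ := hx
  have h := (hw ▸ hasFDerivAt_ringInverse (𝕜 := ℝ) w).comp_hasDerivAt x hf
  have hw_inv : (↑w⁻¹ : Matrix n n 𝕜) = (f x)⁻¹ := by rw [coe_units_inv, hw]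
  simp only [Function.comp_def, ← nonsing_inv_eq_ringInverse, hw_inv, _root_.neg_apply,
    ContinuousLinearMap.mulLeftRight_apply] at h
  exact h

theorem HasDerivAt.conjTranspose_inv_of_linear {ψ : ℝ → Matrix n n 𝕜}
    {A : Matrix n n 𝕜} {x : ℝ} (hψ : HasDerivAt ψ (A * ψ x) x) (hx : IsUnit (ψ x)) :
    HasDerivAt (fun t => (ψ t)ᴴ⁻¹) (-(Aᴴ * (ψ x)ᴴ⁻¹)) x := by
  have hxH : IsUnit (ψ x)ᴴ := hx.star
  convert hψ.matrix_conjTranspose.matrix_inv hxH using 2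
  rw [conjTranspose_mul, ← mul_assoc, nonsing_inv_mul _ ((isUnit_iff_isUnit_det _).1 hxH),
    one_mul]

theorem HasDerivAt.mul_conjTranspose_inv_mul_of_linear {ψ : ℝ → Matrix n n 𝕜}
    {A J : Matrix n n 𝕜} {x : ℝ} (hψ : HasDerivAt ψ (A * ψ x) x) (hx : IsUnit (ψ x))
    (hJ : J * J = 1) (hA : J * Aᴴ * J = -A) :
    HasDerivAt (fun t => J * (ψ t)ᴴ⁻¹ * J) (A * (J * (ψ x)ᴴ⁻¹ * J)) x := by
  have h := ((hψ.conjTranspose_inv_of_linear hx).const_mul J).mul_const J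
  have h_deriv : J * -(Aᴴ * (ψ x)ᴴ⁻¹) * J = A * (J * (ψ x)ᴴ⁻¹ * J) := by
    calc J * -(Aᴴ * (ψ x)ᴴ⁻¹) * J = -(J * Aᴴ * J) * (J * (ψ x)ᴴ⁻¹ * J) := by
          simp only [neg_mul, mul_neg, mul_assoc, ← mul_assoc J J, hJ, one_mul]
      _ = A * (J * (ψ x)ᴴ⁻¹ * J) := by rw [hA, neg_neg]
  rw [h_deriv] at h
  exact h

end MatrixCalculus

theorem Jmat_mul_self {ε : ℂ} (hε : ε = 1 ∨ ε = -1) : Jmat ε * Jmat ε = 1 := by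
  rcases hε with rfl | rfl <;>
    simp [Jmat, ← diagonal_one, diagonal_mul_diagonal, Fin.forall_fin_succ]

theorem Jmat_mul_conjTranspose_mul_Jmat {ε : ℂ} (hε : ε = 1 ∨ ε = -1) (lam : ℝ) (u v : ℝ → ℂ)
    (x : ℝ) :
    Jmat ε * ((Complex.I * (lam : ℂ)) • sigma3 + potential ε u v x)ᴴ * Jmat ε
      = -((Complex.I * (lam : ℂ)) • sigma3 + potential ε u v x) := by
  rcases hε with rfl | rfl <;> ext i j <;> fin_cases i <;> fin_cases j <;>
    simp [Jmat, sigma3, potential, mul_apply, Fin.sum_univ_three, conjTranspose_apply]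

theorem symmetry_reduction_solution_general
    (ε : ℂ) (hε : ε = 1 ∨ ε = -1) (lam : ℝ) (u v : ℝ → ℂ)
    (ψ : ℝ → Mat3) (hinv : ∀ x, IsUnit (ψ x))
    (hψ : ∀ (x : ℝ) (i j : Fin 3),
      HasDerivAt (fun t => ψ t i j)
        ((((Complex.I * (lam : ℂ)) • sigma3 + potential ε u v x) * ψ x) i j) x) :
    ∀ (x : ℝ) (i j : Fin 3),
      HasDerivAt (fun t => (Jmat ε * ((ψ t)ᴴ)⁻¹ * Jmat ε) i j)
        ((((Complex.I * (lam : ℂ)) • sigma3 + potential ε u v x) *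
          (Jmat ε * ((ψ x)ᴴ)⁻¹ * Jmat ε)) i j) x := by
  intro x
  have hψx := Matrix.hasDerivAt_iff_apply.2 (hψ x)
  exact Matrix.hasDerivAt_iff_apply.1 <| hψx.mul_conjTranspose_inv_mul_of_linear (hinv x)
    (Jmat_mul_self hε) (Jmat_mul_conjTranspose_mul_Jmat hε lam u v x)

/-- If `ψ` is a pointwise invertible solution of `ψ' = (iλσ + U)ψ`, then
`φ(x) = J_ε (ψ(x)†)⁻¹ J_ε` also solves `φ' = (iλσ + U)φ`. -/
theorem symmetry_reduction_solution
    (ε : ℂ) (hε : ε = 1 ∨ ε = -1) (lam : ℝ) (u v : ℝ → ℂ)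
    (hu : Continuous u) (hv : Continuous v)
    (ψ : ℝ → Mat3) (hinv : ∀ x, IsUnit (ψ x))
    (hψ : ∀ (x : ℝ) (i j : Fin 3),
      HasDerivAt (fun t => ψ t i j)
        ((((Complex.I * (lam : ℂ)) • sigma3 + potential ε u v x) * ψ x) i j) x) :
    ∀ (x : ℝ) (i j : Fin 3),
      HasDerivAt (fun t => (Jmat ε * ((ψ t)ᴴ)⁻¹ * Jmat ε) i j)
        ((((Complex.I * (lam : ℂ)) • sigma3 + potential ε u v x) *
          (Jmat ε * ((ψ x)ᴴ)⁻¹ * Jmat ε)) i j) x :=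
  symmetry_reduction_solution_general ε hε lam u v ψ hinv hψ
end
end
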